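/- arXiv:1702.01074 — 3 statements merged into one kernel-verified Lean document; each statement's English description precedes it below -/
import Mathlib

section
/- For a in the punctured unit disk, the critical point c_- = a · (2 + |a|^2 − √((4 − |a|^2)(1 − |a|^2))) / (3|a|^2) lies in the open unit disk, i.e. |c_-| < 1, and the critical point c_+ = a · (2 + |a|^2 + √((4 − |a|^2)(1 − |a|^2))) / (3|a|^2) lies outside the closed unit disk, i.e. |c_+| > 1. -/
/-! With `u = 2 + |a|²` and `v = 3|a|`, one has `(4 - |a|²)(1 - |a|²) = u² - v²`, and
`|c_±| = (u ± √(u² - v²)) / v`. For `0 < |a| < 1` we have `0 < v < u`, since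
`u - v = (1 - |a|)(2 - |a|)`; then `u - √(u² - v²) < v` because `(u - v)² < (u - v)(u + v)`,
while `u + √(u² - v²) ≥ u > v`. -/

open Complex

lemma norm_mul_div_mul_norm_sq (a z c : ℂ) :
    ‖a * z / (c * (‖a‖ : ℂ) ^ 2)‖ = ‖z‖ / (‖c‖ * ‖a‖) := by
  rcases eq_or_ne a 0 with rfl | ha
  · simp
  have : 0 < ‖a‖ := norm_pos_iff.mpr ha
  rw [norm_div, norm_mul, norm_mul, norm_pow, Complex.norm_real, norm_norm]
  field_simp

lemma abs_sub_sqrt_sq_sub_sq_lt {u v : ℝ} (hv : 0 < v) (hvu : v < u) :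
    |u - √(u ^ 2 - v ^ 2)| < v := by
  have hsq : √(u ^ 2 - v ^ 2) ^ 2 = u ^ 2 - v ^ 2 := Real.sq_sqrt (by nlinarith)
  have hs : 0 ≤ √(u ^ 2 - v ^ 2) := Real.sqrt_nonneg _
  have hgt : u - v < √(u ^ 2 - v ^ 2) := by nlinarith
  rw [abs_lt]
  constructor <;> nlinarith

lemma lt_abs_add_sqrt_sq_sub_sq {u v : ℝ} (hvu : v < u) :
    v < |u + √(u ^ 2 - v ^ 2)| :=
  calc v < u := hvu
    _ ≤ u + √(u ^ 2 - v ^ 2) := le_add_of_nonneg_right (Real.sqrt_nonneg _)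
    _ ≤ |u + √(u ^ 2 - v ^ 2)| := le_abs_self _

theorem blaschke_critical_points_location (a : ℂ) (ha0 : 0 < ‖a‖)
    (ha1 : ‖a‖ < 1) :
    let s : ℝ := Real.sqrt ((4 - (‖a‖) ^ 2) * (1 - (‖a‖) ^ 2))
    ‖(a * (2 + (‖a‖ : ℂ) ^ 2 - (s : ℂ)) /
        (3 * (‖a‖ : ℂ) ^ 2))‖ < 1 ∧
    ‖(a * (2 + (‖a‖ : ℂ) ^ 2 + (s : ℂ)) /
        (3 * (‖a‖ : ℂ) ^ 2))‖ > 1 := by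
  intro s
  set r := ‖a‖
  have hs : s = √((2 + r ^ 2) ^ 2 - (3 * r) ^ 2) := by
    show √((4 - r ^ 2) * (1 - r ^ 2)) = _; congr 1; ring
  have hv : 0 < 3 * r := by positivity
  have hvu : 3 * r < 2 + r ^ 2 := by nlinarith
  have hcast (x : ℝ) : ‖(2 + (r : ℂ) ^ 2 + x : ℂ)‖ = |2 + r ^ 2 + x| := by
    rw [← Real.norm_eq_abs, ← Complex.norm_real]; push_cast; rfl
  rw [norm_mul_div_mul_norm_sq, norm_mul_div_mul_norm_sq, sub_eq_add_neg, ← ofReal_neg, hcast,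
    hcast, ← sub_eq_add_neg, Complex.norm_ofNat, gt_iff_lt, div_lt_one (by positivity),
    one_lt_div (by positivity), hs]
  exact ⟨abs_sub_sqrt_sq_sub_sq_lt hv hvu, lt_abs_add_sqrt_sq_sub_sq hvu⟩
end

section
/- Let a be in the punctured unit disk and λ ∈ ℂ nonzero. If c is a nonzero complex number with |c| ≤ |a|/2 that is a critical point of B_{a,λ}, then (|λ|/(8|a|))^{1/5} ≤ |c| ≤ (8|λ|/|a|)^{1/5}. -/
open Complex

/-!
At a critical point `c`, clearing denominators in `B'(c) = 0` gives
`c⁵ q = 2λ (1 - ā c)²` with `q = 3 (c - a)(1 - ā c) + c (1 - |a|²)`.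
For `|c| ≤ |a|/2` and `|a| < 1` we have `1/2 ≤ |1 - ā c| ≤ 3/2` and `|a|/2 ≤ |c - a| ≤ 3|a|/2`,
so the dominant term `3 (c - a)(1 - ā c)` pins `|q|` between `|a| |1 - ā c|² / 4` and
`16 |a| |1 - ā c|²`. Hence `|λ|` and `|a| |c|⁵` agree up to a factor `8`; take fifth roots.
-/

open ComplexConjugate

noncomputable def perturbedBlaschke (a lam w : ℂ) : ℂ :=
  w ^ 3 * (w - a) / (1 - conj a * w) + lam / w ^ 2

def blaschkeDerivFactor (a c : ℂ) : ℂ :=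
  3 * (c - a) * (1 - conj a * c) + c * (1 - conj a * a)

section Critical

variable {a lam c : ℂ}

lemma hasDerivAt_perturbedBlaschke (hc : c ≠ 0) (hd : 1 - conj a * c ≠ 0) :
    HasDerivAt (perturbedBlaschke a lam)
      (c ^ 2 * blaschkeDerivFactor a c / (1 - conj a * c) ^ 2 - 2 * lam / c ^ 3) c := by
  have hnum : HasDerivAt (fun w : ℂ => w ^ 3 * (w - a)) (3 * c ^ 2 * (c - a) + c ^ 3) c := by
    simpa using (hasDerivAt_pow 3 c).fun_mul ((hasDerivAt_id c).sub_const a)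
  have hden : HasDerivAt (fun w : ℂ => 1 - conj a * w) (-conj a) c := by
    simpa using ((hasDerivAt_id c).const_mul (conj a)).const_sub 1
  have hpole : HasDerivAt (fun w : ℂ => lam / w ^ 2) (-(2 * lam) / c ^ 3) c := by
    refine ((hasDerivAt_const c lam).fun_div (hasDerivAt_pow 2 c)
      (pow_ne_zero 2 hc)).congr_deriv ?_
    field_simp
    ring
  refine ((hnum.fun_div hden hd).fun_add hpole).congr_deriv ?_
  unfold blaschkeDerivFactor
  field_simp
  ring

lemma perturbedBlaschke_critical_eq (hc : c ≠ 0) (hd : 1 - conj a * c ≠ 0)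
    (hcrit : deriv (perturbedBlaschke a lam) c = 0) :
    c ^ 5 * blaschkeDerivFactor a c = 2 * lam * (1 - conj a * c) ^ 2 := by
  rw [(hasDerivAt_perturbedBlaschke hc hd).deriv, sub_eq_zero,
    div_eq_div_iff (pow_ne_zero 2 hd) (pow_ne_zero 3 hc)] at hcrit
  linear_combination hcrit

end Critical

lemma norm_one_sub_conj_mul_self_le_one {a : ℂ} (ha : ‖a‖ ≤ 1) : ‖1 - conj a * a‖ ≤ 1 := by
  rw [conj_mul', ← ofReal_pow, ← ofReal_one, ← ofReal_sub, norm_real, Real.norm_eq_abs, abs_le]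
  constructor <;> nlinarith [norm_nonneg a]

lemma norm_one_sub_mem_Icc {R : Type*} [SeminormedRing R] [NormOneClass R] {x : R}
    (hx : ‖x‖ ≤ 1 / 2) : ‖1 - x‖ ∈ Set.Icc (1 / 2 : ℝ) (3 / 2) := by
  have hlo := norm_sub_norm_le (1 : R) x
  have hhi := norm_sub_le (1 : R) x
  rw [norm_one] at hlo hhi
  constructor <;> linarith

section SmallCriticalPoint

variable {a c : ℂ}

lemma norm_conj_mul_le_half (ha : ‖a‖ < 1) (hc : ‖c‖ ≤ ‖a‖ / 2) : ‖conj a * c‖ ≤ 1 / 2 := by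
  rw [norm_mul, norm_conj]
  nlinarith [norm_nonneg a, norm_nonneg c]

lemma norm_blaschkeDerivFactor_bounds (ha : ‖a‖ < 1) (hc : ‖c‖ ≤ ‖a‖ / 2) :
    ‖a‖ * ‖1 - conj a * c‖ ^ 2 / 4 ≤ ‖blaschkeDerivFactor a c‖ ∧
      ‖blaschkeDerivFactor a c‖ ≤ 16 * ‖a‖ * ‖1 - conj a * c‖ ^ 2 := by
  obtain ⟨hD, hD'⟩ := norm_one_sub_mem_Icc (norm_conj_mul_le_half ha hc)
  have hE : ‖a‖ / 2 ≤ ‖c - a‖ := by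
    have := norm_sub_norm_le a c
    rw [norm_sub_rev] at this
    linarith
  have hE' : ‖c - a‖ ≤ 3 * ‖a‖ / 2 := by
    have := norm_sub_le c a
    linarith
  have hr : ‖c * (1 - conj a * a)‖ ≤ ‖a‖ / 2 := by
    rw [norm_mul]
    nlinarith [norm_one_sub_conj_mul_self_le_one ha.le, norm_nonneg c,
      norm_nonneg (1 - conj a * a)]
  have hmain : ‖3 * (c - a) * (1 - conj a * c)‖ = 3 * ‖c - a‖ * ‖1 - conj a * c‖ := by
    simp only [norm_mul]
    norm_num
  have hlo := norm_sub_le_norm_add (3 * (c - a) * (1 - conj a * c)) (c * (1 - conj a * a))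
  have hhi := norm_add_le (3 * (c - a) * (1 - conj a * c)) (c * (1 - conj a * a))
  rw [hmain] at hlo hhi
  unfold blaschkeDerivFactor
  set D := ‖1 - conj a * c‖
  have ha0 := norm_nonneg a
  -- `D² - 6D + 2 ≤ 0` and `32D² - 9D - 1 ≥ 0` on `[1/2, 3/2]`
  constructor
  · nlinarith [mul_le_mul_of_nonneg_right hE (by linarith : (0 : ℝ) ≤ D),
      mul_nonneg ha0 (by nlinarith : (0 : ℝ) ≤ -(D ^ 2 - 6 * D + 2))]
  · nlinarith [mul_le_mul_of_nonneg_right hE' (by linarith : (0 : ℝ) ≤ D),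
      mul_nonneg ha0 (by nlinarith : (0 : ℝ) ≤ 32 * D ^ 2 - 9 * D - 1)]

lemma norm_lam_comparable_of_deriv_eq_zero {lam : ℂ} (ha : ‖a‖ < 1) (hc : ‖c‖ ≤ ‖a‖ / 2)
    (hc0 : c ≠ 0)
    (hcrit : deriv (perturbedBlaschke a lam) c = 0) :
    ‖a‖ * ‖c‖ ^ 5 ≤ 8 * ‖lam‖ ∧ ‖lam‖ ≤ 8 * (‖a‖ * ‖c‖ ^ 5) := by
  obtain ⟨hD, -⟩ := norm_one_sub_mem_Icc (norm_conj_mul_le_half ha hc)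
  have hd : 1 - conj a * c ≠ 0 := norm_pos_iff.mp (by linarith)
  have hbalance : ‖c‖ ^ 5 * ‖blaschkeDerivFactor a c‖ = 2 * ‖lam‖ * ‖1 - conj a * c‖ ^ 2 := by
    simpa using congrArg norm (perturbedBlaschke_critical_eq hc0 hd hcrit)
  obtain ⟨hlo, hhi⟩ := norm_blaschkeDerivFactor_bounds ha hc
  have hD2 : 0 < ‖1 - conj a * c‖ ^ 2 := by positivity
  have hc5 : 0 ≤ ‖c‖ ^ 5 := by positivity
  constructor
  · nlinarith [mul_le_mul_of_nonneg_left hlo hc5]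
  · nlinarith [mul_le_mul_of_nonneg_left hhi hc5]

end SmallCriticalPoint

theorem perturbed_blaschke_critical_bounds_general (a lam c : ℂ)
    (ha1 : ‖a‖ < 1) (hc0 : c ≠ 0)
    (hcsmall : ‖c‖ ≤ ‖a‖ / 2)
    (hcrit : deriv (fun w : ℂ => w ^ 3 * (w - a) / (1 - (starRingEnd ℂ) a * w) + lam / w ^ 2) c
      = 0) :
    (‖lam‖ / (8 * ‖a‖)) ^ ((1 : ℝ) / 5) ≤ ‖c‖ ∧
    ‖c‖ ≤ (8 * ‖lam‖ / ‖a‖) ^ ((1 : ℝ) / 5) := by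
  obtain ⟨hupper, hlower⟩ := norm_lam_comparable_of_deriv_eq_zero ha1 hcsmall hc0 hcrit
  have hc : 0 < ‖c‖ := norm_pos_iff.mpr hc0
  have ha : 0 < ‖a‖ := by linarith
  have hfive : (0 : ℝ) < 5 := by norm_num
  rw [one_div]
  constructor
  · rw [Real.rpow_inv_le_iff_of_pos (by positivity) hc.le hfive, Real.rpow_ofNat,
      div_le_iff₀ (by positivity)]
    linarith
  · rw [Real.le_rpow_inv_iff_of_pos hc.le (by positivity) hfive, Real.rpow_ofNat,
      le_div_iff₀ ha]
    linarith

theorem perturbed_blaschke_critical_bounds (a lam c : ℂ) (ha0 : 0 < ‖a‖)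
    (ha1 : ‖a‖ < 1) (hlam : lam ≠ 0) (hc0 : c ≠ 0)
    (hcsmall : ‖c‖ ≤ ‖a‖ / 2)
    (hcrit : deriv (fun w : ℂ => w ^ 3 * (w - a) / (1 - (starRingEnd ℂ) a * w) + lam / w ^ 2) c
      = 0) :
    (‖lam‖ / (8 * ‖a‖)) ^ ((1 : ℝ) / 5) ≤ ‖c‖ ∧
    ‖c‖ ≤ (8 * ‖lam‖ / ‖a‖) ^ ((1 : ℝ) / 5) :=
  perturbed_blaschke_critical_bounds_general a lam c ha1 hc0 hcsmall hcrit
end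

section
/- Let a be in the punctured unit disk. There exists ε > 0 such that for all λ ∈ ℂ with 0 < |λ| < ε and all z with |z| < (|λ|/3)^{1/2}, z ≠ 0, one has |B_{a,λ}(z)| > 2; moreover √(|λ|/3) < |a|/2 for such λ, so this region is disjoint from the annulus containing the five small zeros. -/
open Complex

/-! Near the pole at 0 the term `lam / z ^ 2` dominates: the Blaschke factor `(z - a) / (1 - conj a * z)`
has modulus at most 1 on the closed unit disk, so the polynomial part is at most `‖z‖ ^ 3`, while
`3 ‖z‖ ^ 2 < ‖lam‖` makes `‖lam / z ^ 2‖ > 3 ≥ 2 + ‖z‖ ^ 3`. Taking `ε = 3 ‖a‖ ^ 2 / 4` forces the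
radius `√(‖lam‖ / 3)` below `‖a‖ / 2 < 1`. -/

open ComplexConjugate

theorem normSq_one_sub_conj_mul_sub_normSq_sub (a z : ℂ) :
    normSq (1 - conj a * z) - normSq (z - a) = (1 - normSq a) * (1 - normSq z) := by
  simp only [normSq_apply, sub_re, sub_im, mul_re, mul_im, conj_re, conj_im, one_re, one_im]
  ring

theorem norm_sub_div_one_sub_conj_mul_le_one {a z : ℂ} (ha : ‖a‖ ≤ 1) (hz : ‖z‖ ≤ 1) :
    ‖(z - a) / (1 - conj a * z)‖ ≤ 1 := by
  rcases eq_or_ne (1 - conj a * z) 0 with hden | hden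
  · simp [hden] -- the quotient is the junk value `x / 0 = 0`
  rw [norm_div, div_le_one (norm_pos_iff.mpr hden), ← sq_le_sq₀ (norm_nonneg _) (norm_nonneg _),
    ← normSq_eq_norm_sq, ← normSq_eq_norm_sq, ← sub_nonneg,
    normSq_one_sub_conj_mul_sub_normSq_sub, normSq_eq_norm_sq, normSq_eq_norm_sq]
  exact mul_nonneg (by nlinarith [norm_nonneg a]) (by nlinarith [norm_nonneg z])

theorem two_lt_norm_blaschke_add_div_sq {a z lam : ℂ} (ha : ‖a‖ ≤ 1) (hz0 : z ≠ 0)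
    (hz1 : ‖z‖ ≤ 1) (hlam : 3 * ‖z‖ ^ 2 < ‖lam‖) :
    2 < ‖z ^ 3 * (z - a) / (1 - conj a * z) + lam / z ^ 2‖ := by
  have hz : 0 < ‖z‖ := norm_pos_iff.mpr hz0
  have hblaschke : ‖z ^ 3 * (z - a) / (1 - conj a * z)‖ ≤ ‖z‖ ^ 3 := by
    rw [mul_div_assoc, norm_mul, norm_pow]
    exact mul_le_of_le_one_right (by positivity) (norm_sub_div_one_sub_conj_mul_le_one ha hz1)
  have hpole : 2 + ‖z‖ ^ 3 < ‖lam / z ^ 2‖ := by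
    rw [norm_div, norm_pow, lt_div_iff₀ (by positivity)]
    nlinarith [pow_le_one₀ hz.le hz1 (n := 3), pow_pos hz 2]
  calc 2 < ‖lam / z ^ 2‖ - ‖z ^ 3 * (z - a) / (1 - conj a * z)‖ := by linarith
    _ ≤ _ := by
      rw [add_comm]
      exact norm_sub_le_norm_add _ _

theorem perturbed_blaschke_escape_region (a : ℂ) (ha0 : 0 < ‖a‖)
    (ha1 : ‖a‖ < 1) :
    ∃ ε : ℝ, 0 < ε ∧ ∀ lam : ℂ, 0 < ‖lam‖ → ‖lam‖ < ε →
      (∀ z : ℂ, z ≠ 0 → ‖z‖ < Real.sqrt (‖lam‖ / 3) →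
        2 < ‖z ^ 3 * (z - a) / (1 - (starRingEnd ℂ) a * z) + lam / z ^ 2‖) ∧
      Real.sqrt (‖lam‖ / 3) < ‖a‖ / 2 := by
  refine ⟨3 * ‖a‖ ^ 2 / 4, by positivity, fun lam _ hlam => ?_⟩
  have hradius : Real.sqrt (‖lam‖ / 3) < ‖a‖ / 2 := by
    rw [Real.sqrt_lt' (by positivity)]
    linarith
  refine ⟨fun z hz0 hz => two_lt_norm_blaschke_add_div_sq ha1.le hz0 ?_ ?_, hradius⟩
  · linarith
  · rw [Real.lt_sqrt (norm_nonneg z)] at hz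
    linarith
end
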